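/- Positivity and constancy of the Wronskian (Lemma 6.1): Let μ ≥ 1 and a, r : ℝ → ℝ continuous with 1/μ ≤ a(x) ≤ μ and |r(x)| ≤ μ for all x, let γ > γ̲, and let φ_γ and φ̃_γ be generalized principal eigenfunctions. Then the function W_γ(x) := a(x)(φ̃_γ'(x)φ_γ(x) − φ_γ'(x)φ̃_γ(x)) is constant on ℝ, and its constant value is strictly positive. -/

import Mathlib

open MeasureTheory Filter

/-- The generalized principal eigenvalue `γ̲`: the supremum over nonzero compactly
supported `C¹` functions `φ` of the Rayleigh quotient
`(∫ (r φ² − a (φ')²))/(∫ φ²)`. -/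
noncomputable def gammaBar (a r : ℝ → ℝ) : ℝ :=
  sSup {c : ℝ | ∃ φ : ℝ → ℝ, ContDiff ℝ 1 φ ∧ HasCompactSupport φ ∧ φ ≠ 0 ∧
    c = (∫ x : ℝ, (r x * φ x ^ 2 - a x * deriv φ x ^ 2)) / ∫ x : ℝ, φ x ^ 2}

/-- A generalized principal eigenfunction `φ` (with explicit derivative `φ'`):
positive, `φ(0) = 1`, `(aφ')' + (r − γ)φ = 0` pointwise, and `φ → 0` along the
filter `l` (`atTop` for `φ_γ`, `atBot` for `φ̃_γ`). -/
def IsGenPrincEig (a r : ℝ → ℝ) (γ : ℝ) (l : Filter ℝ) (φ φ' : ℝ → ℝ) : Prop :=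
  (∀ x, 0 < φ x) ∧ φ 0 = 1 ∧
  (∀ x, HasDerivAt φ (φ' x) x) ∧
  (∀ x, HasDerivAt (fun y => a y * φ' y) ((γ - r x) * φ x) x) ∧
  Tendsto φ l (nhds 0)

/-!
The Wronskian of two solutions of `(a φ')' + (r - γ) φ = 0` has zero derivative, hence is
constant. If it were `≤ 0`, the ratio `φ_γ / φ̃_γ` would be nondecreasing, so `φ_γ ≤ C φ̃_γ` on
`(-∞, 0]` and `φ_γ` would decay at both ends. Multiplying by the rescaled bump `χ(x / R)` and
integrating by parts against the equation, the Rayleigh quotient of `χ(· / R) φ_γ` is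
`γ - ∫ a χ_R'² φ_γ² / ∫ χ_R² φ_γ² ≥ γ - O(1 / R)`, since `φ_γ` is bounded and `∫ χ_R'² = ∫ χ'² / R`.
Letting `R → ∞` gives `γ ≤ γ̲`.
-/

open Set Topology

section

variable {a r φ φ' ψ ψ' χ : ℝ → ℝ} {γ A B M R : ℝ}

noncomputable def rayleighQuotient (a r ψ : ℝ → ℝ) : ℝ :=
  (∫ x, (r x * ψ x ^ 2 - a x * deriv ψ x ^ 2)) / ∫ x, ψ x ^ 2

theorem rayleighQuotient_le_max (ha : ∀ x, 0 ≤ a x) (hr : ∀ x, r x ≤ B) (ψ : ℝ → ℝ) :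
    rayleighQuotient a r ψ ≤ max B 0 := by
  -- not `≤ B`: the quotient is `0` whenever one of its integrals is a junk value
  unfold rayleighQuotient
  by_cases hψ : Integrable fun x => ψ x ^ 2
  · by_cases hN : Integrable fun x => r x * ψ x ^ 2 - a x * deriv ψ x ^ 2
    · have hD : 0 ≤ ∫ x, ψ x ^ 2 := integral_nonneg fun x => sq_nonneg _
      refine div_le_of_le_mul₀ hD (le_max_right B 0) ?_
      calc ∫ x, (r x * ψ x ^ 2 - a x * deriv ψ x ^ 2)
          ≤ ∫ x, B * ψ x ^ 2 := integral_mono hN (hψ.const_mul B) fun x =>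
            by nlinarith [hr x, sq_nonneg (ψ x), mul_nonneg (ha x) (sq_nonneg (deriv ψ x))]
        _ ≤ max B 0 * ∫ x, ψ x ^ 2 := by
            rw [integral_const_mul]; exact mul_le_mul_of_nonneg_right (le_max_left _ _) hD
    · simp [integral_undef hN]
  · simp [integral_undef hψ]

theorem rayleighQuotient_le_gammaBar (ha : ∀ x, 0 ≤ a x) (hr : ∀ x, r x ≤ B)
    (hψ : ContDiff ℝ 1 ψ) (hψs : HasCompactSupport ψ) (hψ0 : ψ ≠ 0) :
    rayleighQuotient a r ψ ≤ gammaBar a r :=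
  le_csSup ⟨max B 0, by rintro _ ⟨ψ, -, -, -, rfl⟩; exact rayleighQuotient_le_max ha hr ψ⟩
    ⟨ψ, hψ, hψs, hψ0, rfl⟩

theorem integral_rayleigh_numerator_mul_eq (hac : Continuous a) (hrc : Continuous r)
    (hφ : ∀ x, HasDerivAt φ (φ' x) x) (hφ'c : Continuous φ')
    (hφeq : ∀ x, HasDerivAt (fun y => a y * φ' y) ((γ - r x) * φ x) x)
    (hχ : ContDiff ℝ 1 χ) (hχs : HasCompactSupport χ) :
    ∫ x, (r x * (χ x * φ x) ^ 2 - a x * deriv (fun y => χ y * φ y) x ^ 2) =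
      γ * (∫ x, (χ x * φ x) ^ 2) - ∫ x, a x * deriv χ x ^ 2 * φ x ^ 2 := by
  have hφc : Continuous φ := continuous_iff_continuousAt.2 fun x => (hφ x).continuousAt
  have hχc : Continuous χ := hχ.continuous
  have hχ'c : Continuous (deriv χ) := hχ.continuous_deriv le_rfl
  have hχd (x : ℝ) : HasDerivAt χ (deriv χ x) x :=
    (hχ.differentiable one_ne_zero x).hasDerivAt
  have hu (x : ℝ) : deriv (fun y => χ y * φ y) x = deriv χ x * φ x + χ x * φ' x :=
    ((hχd x).mul (hφ x)).deriv
  have hint (g : ℝ → ℝ) (hg : Continuous g) (hg0 : ∀ x, χ x = 0 → deriv χ x = 0 → g x = 0) :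
      Integrable g :=
    hg.integrable_of_hasCompactSupport <| HasCompactSupport.intro hχs fun x hx =>
      hg0 x (image_eq_zero_of_notMem_tsupport hx)
        (image_eq_zero_of_notMem_tsupport fun h => hx (tsupport_deriv_subset h))
  -- `∫ F' = 0` is the integration by parts `∫ (a φ')' χ² φ = -∫ a φ' (χ² φ)'`; after it only the
  -- `a χ'² φ²` term of `a (χ φ)'²` survives.
  set F : ℝ → ℝ := fun x => χ x ^ 2 * φ x * (a x * φ' x)
  set G : ℝ → ℝ := fun x =>
    (2 * χ x * deriv χ x * φ x + χ x ^ 2 * φ' x) * (a x * φ' x) + χ x ^ 2 * φ x * ((γ - r x) * φ x)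
  have hF (x : ℝ) : HasDerivAt F (G x) x := by
    refine (((hχd x).fun_pow 2).fun_mul (hφ x)).fun_mul (hφeq x) |>.congr_deriv ?_
    simp only [G]; ring
  have hGi : Integrable G := hint G (by fun_prop) fun x h _ => by simp [G, h]
  have hG : ∫ x, G x = 0 :=
    integral_eq_zero_of_hasDerivAt_of_integrable hF hGi
      (hint F (by fun_prop) fun x h _ => by simp [F, h])
  have hu2 : Integrable fun x => (χ x * φ x) ^ 2 := hint _ (by fun_prop) fun x h _ => by simp [h]
  have hE : Integrable fun x => a x * deriv χ x ^ 2 * φ x ^ 2 :=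
    hint _ (by fun_prop) fun x _ h => by simp [h]
  calc ∫ x, (r x * (χ x * φ x) ^ 2 - a x * deriv (fun y => χ y * φ y) x ^ 2)
      = ∫ x, (γ * (χ x * φ x) ^ 2 - a x * deriv χ x ^ 2 * φ x ^ 2 - G x) := by
        congr 1; ext x; rw [hu]; ring
    _ = γ * (∫ x, (χ x * φ x) ^ 2) - ∫ x, a x * deriv χ x ^ 2 * φ x ^ 2 := by
        have hγu2 : Integrable fun x => γ * (χ x * φ x) ^ 2 := hu2.const_mul γ
        have hγuE : Integrable fun x => γ * (χ x * φ x) ^ 2 - a x * deriv χ x ^ 2 * φ x ^ 2 :=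
          hγu2.sub hE
        rw [integral_sub hγuE hGi, integral_sub hγu2 hE, integral_const_mul, hG, sub_zero]

theorem integral_deriv_comp_inv_mul_sq (χ : ℝ → ℝ) {R : ℝ} (hR : 0 < R) :
    ∫ x, deriv (fun y => χ (R⁻¹ * y)) x ^ 2 = R⁻¹ * ∫ x, deriv χ x ^ 2 := by
  simp_rw [deriv_comp_mul_left, smul_eq_mul, mul_pow]
  rw [integral_const_mul, Measure.integral_comp_inv_mul_left (fun y => deriv χ y ^ 2),
    abs_of_pos hR, smul_eq_mul]
  field_simp

theorem integral_mul_deriv_rescaled_sq_le (ha : ∀ x, 0 ≤ a x) (haA : ∀ x, a x ≤ A)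
    (hφM : ∀ x, φ x ^ 2 ≤ M) (hχ : ContDiff ℝ 1 χ) (hχs : HasCompactSupport χ) (hR : 0 < R) :
    ∫ x, a x * deriv (fun y => χ (R⁻¹ * y)) x ^ 2 * φ x ^ 2 ≤
      A * M * (∫ x, deriv χ x ^ 2) * R⁻¹ := by
  set χR : ℝ → ℝ := fun x => χ (R⁻¹ * x)
  have hχR'c : Continuous (deriv χR) :=
    (hχ.comp (contDiff_const.mul contDiff_id)).continuous_deriv le_rfl
  have hχRs : HasCompactSupport (deriv χR) := by
    simpa only [smul_eq_mul] using (hχs.comp_smul (inv_ne_zero hR.ne')).deriv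
  have hint : Integrable fun x => A * M * deriv χR x ^ 2 :=
    (by fun_prop : Continuous fun x => A * M * deriv χR x ^ 2).integrable_of_hasCompactSupport
      (hχRs.comp_left (g := fun t => A * M * t ^ 2) (by simp))
  calc ∫ x, a x * deriv χR x ^ 2 * φ x ^ 2 ≤ ∫ x, A * M * deriv χR x ^ 2 := by
        refine integral_mono_of_nonneg (ae_of_all _ fun x => ?_) hint (ae_of_all _ fun x => ?_)
        · exact mul_nonneg (mul_nonneg (ha x) (sq_nonneg _)) (sq_nonneg _)
        have : a x * φ x ^ 2 ≤ A * M :=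
          mul_le_mul (haA x) (hφM x) (sq_nonneg _) ((ha x).trans (haA x))
        nlinarith [sq_nonneg (deriv χR x)]
    _ = A * M * (R⁻¹ * ∫ x, deriv χ x ^ 2) := by
        rw [integral_const_mul, ← integral_deriv_comp_inv_mul_sq χ hR]
    _ = A * M * (∫ x, deriv χ x ^ 2) * R⁻¹ := by ring

theorem Continuous.bddAbove_range_of_tendsto_atBot_atTop {f : ℝ → ℝ} (hf : Continuous f)
    (hbot : Tendsto f atBot (𝓝 0)) (htop : Tendsto f atTop (𝓝 0)) : BddAbove (range f) :=
  (ZeroAtInftyContinuousMap.isBounded_range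
    ⟨⟨f, hf⟩, by rw [cocompact_eq_atBot_atTop]; exact hbot.sup htop⟩).bddAbove

theorem sub_div_le_gammaBar (hac : Continuous a) (hrc : Continuous r) (ha : ∀ x, 0 ≤ a x)
    (hrB : ∀ x, r x ≤ B)
    (hφ : ∀ x, HasDerivAt φ (φ' x) x) (hφ'c : Continuous φ')
    (hφeq : ∀ x, HasDerivAt (fun y => a y * φ' y) ((γ - r x) * φ x) x)
    (hχ : ContDiff ℝ 1 χ) (hχs : HasCompactSupport χ) (hD : 0 < ∫ x, (χ x * φ x) ^ 2) :
    γ - (∫ x, a x * deriv χ x ^ 2 * φ x ^ 2) / ∫ x, (χ x * φ x) ^ 2 ≤ gammaBar a r := by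
  have hφC : ContDiff ℝ 1 φ := contDiff_one_iff_deriv.2
    ⟨fun x => (hφ x).differentiableAt, by rwa [show deriv φ = φ' from funext fun x => (hφ x).deriv]⟩
  have hu0 : (fun x => χ x * φ x) ≠ 0 := fun h => by
    simp [show ∀ x, χ x * φ x = 0 from congrFun h] at hD
  convert rayleighQuotient_le_gammaBar ha hrB (hχ.mul hφC) (hχs.mul_right) hu0 using 1
  rw [rayleighQuotient, integral_rayleigh_numerator_mul_eq hac hrc hφ hφ'c hφeq hχ hχs, sub_div,
    mul_div_cancel_right₀ _ hD.ne']

theorem sub_le_gammaBar_of_rescaled_cutoff (hac : Continuous a) (hrc : Continuous r)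
    (ha : ∀ x, 0 < a x) (haA : ∀ x, a x ≤ A) (hrB : ∀ x, r x ≤ B)
    (hφpos : ∀ x, 0 < φ x) (hφM : ∀ x, φ x ^ 2 ≤ M)
    (hφ : ∀ x, HasDerivAt φ (φ' x) x) (hφ'c : Continuous φ')
    (hφeq : ∀ x, HasDerivAt (fun y => a y * φ' y) ((γ - r x) * φ x) x)
    (hχ : ContDiff ℝ 1 χ) (hχs : HasCompactSupport χ) (hχ1 : ∀ x ∈ Icc (-1) 1, χ x = 1)
    (hR : 1 ≤ R) :
    γ - A * M * (∫ x, deriv χ x ^ 2) / (∫ x in (-1)..1, φ x ^ 2) * R⁻¹ ≤ gammaBar a r := by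
  have hφc : Continuous φ := continuous_iff_continuousAt.2 fun x => (hφ x).continuousAt
  have hR0 : 0 < R := one_pos.trans_le hR
  set d := ∫ x in (-1)..1, φ x ^ 2 with hd_def
  have hd : 0 < d := intervalIntegral.intervalIntegral_pos_of_pos
    ((by fun_prop : Continuous fun x => φ x ^ 2).intervalIntegrable (-1) 1)
    (fun x => pow_pos (hφpos x) 2) (by norm_num)
  set χR : ℝ → ℝ := fun x => χ (R⁻¹ * x)
  have hχR : ContDiff ℝ 1 χR := hχ.comp (contDiff_const.mul contDiff_id)
  have hχRs : HasCompactSupport χR := by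
    simpa only [smul_eq_mul] using hχs.comp_smul (inv_ne_zero hR0.ne')
  have hχR1 (x : ℝ) (hx : x ∈ Ioc (-1) 1) : χR x = 1 := by
    refine hχ1 _ (abs_le.1 ?_)
    rw [abs_mul, abs_inv, abs_of_pos hR0]
    exact mul_le_one₀ (inv_le_one_of_one_le₀ hR) (abs_nonneg x) (abs_le.2 ⟨hx.1.le, hx.2⟩)
  have hD : d ≤ ∫ x, (χR x * φ x) ^ 2 := by
    have hint : Integrable fun x => (χR x * φ x) ^ 2 :=
      (by fun_prop : Continuous fun x => (χR x * φ x) ^ 2).integrable_of_hasCompactSupport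
        (hχRs.mul_right.comp_left (g := fun t : ℝ => t ^ 2) (by simp))
    calc d = ∫ x in Ioc (-1) 1, (χR x * φ x) ^ 2 := by
          rw [hd_def, intervalIntegral.integral_of_le (by norm_num)]
          exact setIntegral_congr_fun measurableSet_Ioc fun x hx => by simp [hχR1 x hx]
      _ ≤ ∫ x, (χR x * φ x) ^ 2 := setIntegral_le_integral hint (ae_of_all _ fun x => sq_nonneg _)
  have hE0 : 0 ≤ ∫ x, a x * deriv χR x ^ 2 * φ x ^ 2 :=
    integral_nonneg fun x => mul_nonneg (mul_nonneg (ha x).le (sq_nonneg _)) (sq_nonneg _)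
  have hE := integral_mul_deriv_rescaled_sq_le (fun x => (ha x).le) haA hφM hχ hχs hR0
  calc γ - A * M * (∫ x, deriv χ x ^ 2) / d * R⁻¹
      ≤ γ - (∫ x, a x * deriv χR x ^ 2 * φ x ^ 2) / ∫ x, (χR x * φ x) ^ 2 := by
        have := div_le_div₀ (hE0.trans hE) hE hd hD
        rw [div_mul_eq_mul_div]
        linarith
    _ ≤ gammaBar a r := sub_div_le_gammaBar hac hrc (fun x => (ha x).le) hrB hφ hφ'c hφeq hχR hχRs
        (hd.trans_le hD)

theorem le_gammaBar_of_tendsto_zero (hac : Continuous a) (hrc : Continuous r)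
    (ha : ∀ x, 0 < a x) (haA : ∀ x, a x ≤ A) (hrB : ∀ x, r x ≤ B)
    (hφpos : ∀ x, 0 < φ x) (hφ : ∀ x, HasDerivAt φ (φ' x) x)
    (hφeq : ∀ x, HasDerivAt (fun y => a y * φ' y) ((γ - r x) * φ x) x)
    (hbot : Tendsto φ atBot (𝓝 0)) (htop : Tendsto φ atTop (𝓝 0)) :
    γ ≤ gammaBar a r := by
  have hφc : Continuous φ := continuous_iff_continuousAt.2 fun x => (hφ x).continuousAt
  have hφ'c : Continuous φ' := by
    have : Continuous fun x => a x * φ' x / a x :=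
      (continuous_iff_continuousAt.2 fun x => (hφeq x).continuousAt).div hac fun x => (ha x).ne'
    simpa [mul_div_cancel_left₀ _ (ha _).ne'] using this
  obtain ⟨M, hM⟩ :=
    (show Continuous fun x => φ x ^ 2 by fun_prop).bddAbove_range_of_tendsto_atBot_atTop
      (by simpa using hbot.pow 2) (by simpa using htop.pow 2)
  let b : ContDiffBump (0 : ℝ) := ⟨1, 2, one_pos, one_lt_two⟩
  have hb1 (x : ℝ) (hx : x ∈ Icc (-1) 1) : b x = 1 :=
    b.one_of_mem_closedBall (by simpa [abs_le] using hx)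
  have key (R : ℝ) (hR : 1 ≤ R) := sub_le_gammaBar_of_rescaled_cutoff hac hrc ha haA hrB hφpos
    (fun x => hM (mem_range_self x)) hφ hφ'c hφeq b.contDiff b.hasCompactSupport hb1 hR
  refine le_of_tendsto ?_ (eventually_atTop.2 ⟨1, key⟩)
  simpa using (tendsto_inv_atTop_zero.const_mul _).const_sub γ

theorem hasDerivAt_wronskian (hφ : ∀ x, HasDerivAt φ (φ' x) x)
    (hφeq : ∀ x, HasDerivAt (fun y => a y * φ' y) ((γ - r x) * φ x) x)
    (hψ : ∀ x, HasDerivAt ψ (ψ' x) x)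
    (hψeq : ∀ x, HasDerivAt (fun y => a y * ψ' y) ((γ - r x) * ψ x) x) (x : ℝ) :
    HasDerivAt (fun y => a y * (ψ' y * φ y - φ' y * ψ y)) 0 x := by
  have h := ((hψeq x).fun_mul (hφ x)).fun_sub ((hφeq x).fun_mul (hψ x))
  rw [show (fun y => a y * (ψ' y * φ y - φ' y * ψ y)) =
    fun y => a y * ψ' y * φ y - a y * φ' y * ψ y from funext fun y => by ring]
  exact h.congr_deriv (by ring)

theorem monotone_div_of_wronskian_nonpos (hφ : ∀ x, HasDerivAt φ (φ' x) x)
    (hψ : ∀ x, HasDerivAt ψ (ψ' x) x) (hψ0 : ∀ x, ψ x ≠ 0)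
    (hW : ∀ x, ψ' x * φ x - φ' x * ψ x ≤ 0) :
    Monotone fun x => φ x / ψ x :=
  monotone_of_hasDerivAt_nonneg (fun x => (hφ x).div (hψ x) (hψ0 x)) fun x =>
    div_nonneg (by linarith [hW x]) (sq_nonneg _)

theorem tendsto_atBot_of_monotone_div (hφ : ∀ x, 0 ≤ φ x) (hψ : ∀ x, 0 < ψ x)
    (hmono : Monotone fun x => φ x / ψ x) (hψbot : Tendsto ψ atBot (𝓝 0)) :
    Tendsto φ atBot (𝓝 0) := by
  refine tendsto_of_tendsto_of_tendsto_of_le_of_le' tendsto_const_nhds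
    (by simpa using hψbot.const_mul (φ 0 / ψ 0)) (Eventually.of_forall hφ) ?_
  filter_upwards [eventually_le_atBot 0] with x hx
  have := hmono hx
  rwa [div_le_iff₀ (hψ x)] at this

end

/-- Lemma 6.1: the Wronskian `W_γ = a(φ̃_γ'φ_γ − φ_γ'φ̃_γ)` is a positive constant. -/
theorem wronskian_positive_constant (μ : ℝ) (hμ : 1 ≤ μ) (a r : ℝ → ℝ)
    (hac : Continuous a) (hrc : Continuous r)
    (ha : ∀ x, 1 / μ ≤ a x ∧ a x ≤ μ) (hr : ∀ x, |r x| ≤ μ)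
    (γ : ℝ) (hγ : gammaBar a r < γ)
    (φ φ' φt φt' : ℝ → ℝ)
    (hφ : IsGenPrincEig a r γ Filter.atTop φ φ')
    (hφt : IsGenPrincEig a r γ Filter.atBot φt φt') :
    ∃ c : ℝ, 0 < c ∧ ∀ x : ℝ, a x * (φt' x * φ x - φ' x * φt x) = c := by
  obtain ⟨hpos, -, hd, hode, htop⟩ := hφ
  obtain ⟨htpos, -, htd, htode, hbot⟩ := hφt
  have hapos (x : ℝ) : 0 < a x := lt_of_lt_of_le (by positivity) (ha x).1
  have hWderiv (x : ℝ) := hasDerivAt_wronskian hd hode htd htode x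
  have hconst (x : ℝ) : a x * (φt' x * φ x - φ' x * φt x) = a 0 * (φt' 0 * φ 0 - φ' 0 * φt 0) :=
    is_const_of_deriv_eq_zero (fun y => (hWderiv y).differentiableAt) (fun y => (hWderiv y).deriv) x 0
  refine ⟨_, lt_of_not_ge fun hc => hγ.not_ge ?_, hconst⟩
  have hmono := monotone_div_of_wronskian_nonpos hd htd (fun x => (htpos x).ne') fun x =>
    nonpos_of_mul_nonpos_right ((hconst x).trans_le hc) (hapos x)
  exact le_gammaBar_of_tendsto_zero hac hrc hapos (fun x => (ha x).2)
    (fun x => (le_abs_self _).trans (hr x)) hpos hd hode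
    (tendsto_atBot_of_monotone_div (fun x => (hpos x).le) htpos hmono hbot) htop
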